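/- arXiv:2212.06129 — 2 statements merged into one kernel-verified Lean document; each statement's English description precedes it below -/
import Mathlib

section
/- Let X be a real-valued random variable with law μ, let X_1,…,X_N be i.i.d. samples of X, and let M = min(X_1,…,X_N). For any ε ∈ [0,1], the probability (over the N samples) that μ({x : x ≥ M}) ≥ 1 − ε is at least 1 − (1−ε)^N. -/
/-!
Let `S = {y | μ [y, ∞) < 1 - ε}`. It is an upper set with `μ S ≤ 1 - ε`: by inner regularity it
suffices to bound `μ K` for compact `K ⊆ S`, and such a `K` lies in `[k, ∞)` for its least element
`k ∈ S`. If `μ [M, ∞) < 1 - ε` then `M ∈ S`, so every `X i ≥ M` lies in `S`, an event of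
probability `μ S ^ N ≤ (1 - ε) ^ N` by independence.
-/

open MeasureTheory ProbabilityTheory Set
open scoped ENNReal

lemma isUpperSet_setOf_measure_Ici_lt {α : Type*} [Preorder α] [MeasurableSpace α]
    (μ : Measure α) (t : ℝ≥0∞) : IsUpperSet {y | μ (Ici y) < t} :=
  fun _ _ hxy hx => (measure_mono (Ici_subset_Ici.2 hxy)).trans_lt hx

section LinearOrder

variable {α : Type*} [LinearOrder α] [TopologicalSpace α] [OrderClosedTopology α]
  [MeasurableSpace α] [OpensMeasurableSpace α]

lemma measurableSet_setOf_measure_Ici_lt (μ : Measure α) (t : ℝ≥0∞) :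
    MeasurableSet {y | μ (Ici y) < t} :=
  (isUpperSet_setOf_measure_Ici_lt μ t).ordConnected.measurableSet

lemma measure_setOf_measure_Ici_lt_le (μ : Measure α) [μ.InnerRegular] (t : ℝ≥0∞) :
    μ {y | μ (Ici y) < t} ≤ t := by
  by_contra! h
  obtain ⟨K, hKS, hK, htK⟩ := (measurableSet_setOf_measure_Ici_lt μ t).exists_lt_isCompact h
  obtain ⟨k, hkK, hk⟩ :=
    hK.exists_isLeast (nonempty_of_measure_ne_zero (zero_le.trans_lt htK).ne')
  exact (hKS hkK).not_ge (htK.trans_le (measure_mono hk)).le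

end LinearOrder

lemma ProbabilityTheory.iIndepFun.measure_iInter_preimage_eq_pow {Ω ι β : Type*}
    [MeasurableSpace Ω] [MeasurableSpace β] [Fintype ι] {P : Measure Ω} {μ : Measure β}
    {X : ι → Ω → β} (hX : iIndepFun X P) (hmeas : ∀ i, AEMeasurable (X i) P)
    (hlaw : ∀ i, P.map (X i) = μ) {S : Set β} (hS : MeasurableSet S) :
    P (⋂ i, X i ⁻¹' S) = μ S ^ Fintype.card ι := by
  have := hX.measure_inter_preimage_eq_mul Finset.univ (sets := fun _ => S) fun _ _ => hS
  simp only [Finset.mem_univ, iInter_true] at this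
  simp_rw [this, ← Measure.map_apply_of_aemeasurable (hmeas _) hS, hlaw, Finset.prod_const,
    Finset.card_univ]

theorem stmt_0_general {Ω : Type*} [MeasurableSpace Ω] (P : Measure Ω) [IsProbabilityMeasure P]
    (μ : Measure ℝ) [IsProbabilityMeasure μ] (N : ℕ)
    (X : Fin N → Ω → ℝ) (hmeas : ∀ i, Measurable (X i))
    (hindep : iIndepFun X P)
    (hlaw : ∀ i, Measure.map (X i) P = μ)
    (ε : ℝ) (hε : ε ∈ Set.Icc (0 : ℝ) 1)
    (hne : (Finset.univ : Finset (Fin N)).Nonempty)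
    (M : Ω → ℝ) (hM : ∀ ω, M ω = Finset.univ.inf' hne (fun i => X i ω)) :
    1 - (1 - ε) ^ N ≤
      (P {ω | 1 - ε ≤ (μ {x | M ω ≤ x}).toReal}).toReal := by
  set t := ENNReal.ofReal (1 - ε)
  set S := {y | μ (Ici y) < t}
  have hS : MeasurableSet S := measurableSet_setOf_measure_Ici_lt μ t
  have hgood : (⋂ i, X i ⁻¹' S)ᶜ ⊆ {ω | 1 - ε ≤ (μ {x | M ω ≤ x}).toReal} := by
    intro ω hω
    obtain ⟨i, hi⟩ : ∃ i, t ≤ μ (Ici (X i ω)) := by simpa [S] using hω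
    have hMi : M ω ≤ X i ω := hM ω ▸ Finset.inf'_le _ (Finset.mem_univ i)
    rw [mem_ofPred_eq, ← ENNReal.ofReal_le_iff_le_toReal (measure_ne_top _ _)]
    exact hi.trans (measure_mono (Ici_subset_Ici.2 hMi))
  have hbound : 1 - t ^ N ≤ P {ω | 1 - ε ≤ (μ {x | M ω ≤ x}).toReal} :=
    calc 1 - t ^ N ≤ 1 - μ S ^ N := by gcongr; exact measure_setOf_measure_Ici_lt_le μ t
      _ = P (⋂ i, X i ⁻¹' S)ᶜ := by
        rw [prob_compl_eq_one_sub (.iInter fun i => hmeas i hS),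
          hindep.measure_iInter_preimage_eq_pow (fun i => (hmeas i).aemeasurable) hlaw hS,
          Fintype.card_fin]
      _ ≤ _ := measure_mono hgood
  have h1ε : 0 ≤ 1 - ε := sub_nonneg.2 hε.2
  have ht : t ≤ 1 := ENNReal.ofReal_le_one.2 (sub_le_self _ hε.1)
  calc 1 - (1 - ε) ^ N = (1 - t ^ N).toReal := by
        rw [ENNReal.toReal_sub_of_le (pow_le_one₀ bot_le ht) ENNReal.one_ne_top,
          ← ENNReal.ofReal_pow h1ε, ENNReal.toReal_ofReal (pow_nonneg h1ε _), ENNReal.toReal_one]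
    _ ≤ _ := ENNReal.toReal_mono (measure_ne_top _ _) hbound

/-- Scenario-verification bound: the minimum of `N` i.i.d. samples underperforms the
`(1-ε)`-quantile with confidence at least `1 - (1-ε)^N`. -/
theorem stmt_0 {Ω : Type*} [MeasurableSpace Ω] (P : Measure Ω) [IsProbabilityMeasure P]
    (μ : Measure ℝ) [IsProbabilityMeasure μ] (N : ℕ) (hN : 0 < N)
    (X : Fin N → Ω → ℝ) (hmeas : ∀ i, Measurable (X i))
    (hindep : iIndepFun X P)
    (hlaw : ∀ i, Measure.map (X i) P = μ)
    (ε : ℝ) (hε : ε ∈ Set.Icc (0 : ℝ) 1)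
    (hne : (Finset.univ : Finset (Fin N)).Nonempty)
    (M : Ω → ℝ) (hM : ∀ ω, M ω = Finset.univ.inf' hne (fun i => X i ω)) :
    1 - (1 - ε) ^ N ≤
      (P {ω | 1 - ε ≤ (μ {x | M ω ≤ x}).toReal}).toReal :=
  stmt_0_general P μ N X hmeas hindep hlaw ε hε hne M hM
end

section
/- Let μ be a probability measure on ℝ with a strictly increasing continuous CDF F. If X_1,…,X_N are i.i.d. with law μ and M = min_i X_i, then ℙ[ μ({x : x ≥ M}) ≥ 1−ε ] = ℙ[ F(M) ≤ ε ] = 1 − (1−ε)^N, i.e., the bound in the scenario-verification theorem is tight for atomless distributions. -/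
/-!
A continuous cdf `F` charges no point, so `μ [M, ∞) = 1 - F M`, and `F` pushes `μ` forward to the
uniform law on `[0, 1]`. As `F` is monotone, `F M > ε` exactly when every `F (X i) > ε`, which by
independence has probability `(1 - ε) ^ N`.
-/

open MeasureTheory ProbabilityTheory Set

namespace ProbabilityTheory

variable {μ : Measure ℝ}

lemma mem_range_cdf_of_continuous (hcont : Continuous (cdf μ)) {ε : ℝ} (hε : ε ∈ Ioo 0 1) :
    ε ∈ range (cdf μ) := by
  obtain ⟨a, ha⟩ := ((tendsto_cdf_atBot μ).eventually_lt_const hε.1).exists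
  obtain ⟨b, hb⟩ := ((tendsto_cdf_atTop μ).eventually_const_lt hε.2).exists
  exact mem_range_of_exists_le_of_exists_ge hcont ⟨a, ha.le⟩ ⟨b, hb.le⟩

variable [IsProbabilityMeasure μ]

lemma measure_singleton_eq_zero_of_continuous_cdf (hcont : Continuous (cdf μ)) (a : ℝ) :
    μ {a} = 0 := by
  rw [← measure_cdf μ, StieltjesFunction.measure_singleton,
    hcont.continuousWithinAt.leftLim_eq, sub_self, ENNReal.ofReal_zero]

lemma measureReal_Ici_of_continuous_cdf (hcont : Continuous (cdf μ)) (a : ℝ) :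
    μ.real (Ici a) = 1 - cdf μ a := by
  rw [← measureReal_congr (Ioi_ae_eq_Ici' (measure_singleton_eq_zero_of_continuous_cdf hcont a)),
    ← compl_Iic, probReal_compl_eq_one_sub measurableSet_Iic, cdf_eq_real]

/-- The probability integral transform. -/
lemma measureReal_cdf_le (hmono : StrictMono (cdf μ)) (hcont : Continuous (cdf μ))
    {ε : ℝ} (hε : ε ∈ Icc 0 1) : μ.real {x | cdf μ x ≤ ε} = ε := by
  rcases hε.1.eq_or_lt with rfl | hε0
  · have : {x | cdf μ x ≤ 0} = ∅ := eq_empty_of_forall_notMem fun x hx =>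
      (hmono (sub_one_lt x)).not_ge (hx.trans (cdf_nonneg μ _))
    simp [this]
  rcases hε.2.eq_or_lt with rfl | hε1
  · simp [cdf_le_one]
  obtain ⟨a, rfl⟩ := mem_range_cdf_of_continuous hcont ⟨hε0, hε1⟩
  simp_rw [hmono.le_iff_le]
  exact (cdf_eq_real μ a).symm

end ProbabilityTheory

lemma Finset.apply_inf'_le_iff {α γ : Type*} [LinearOrder α] [Preorder γ] {f : α → γ}
    (hf : Monotone f) {ι : Type*} {s : Finset ι} (hs : s.Nonempty) (g : ι → α) (c : γ) :
    f (s.inf' hs g) ≤ c ↔ ∃ i ∈ s, f (g i) ≤ c := by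
  refine ⟨fun h => ?_, fun ⟨i, hi, h⟩ => (hf (s.inf'_le g hi)).trans h⟩
  obtain ⟨i, hi, heq⟩ := s.exists_mem_eq_inf' hs g
  exact ⟨i, hi, heq ▸ h⟩

section

variable {Ω ι β : Type*} [MeasurableSpace Ω] [MeasurableSpace β] [Fintype ι]

lemma ProbabilityTheory.iIndepFun.measureReal_iUnion_preimage_of_identDistrib
    {P : Measure Ω} [IsProbabilityMeasure P] {ν : Measure β} [IsProbabilityMeasure ν]
    {X : ι → Ω → β} (hindep : iIndepFun X P) (hmeas : ∀ i, Measurable (X i))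
    (hlaw : ∀ i, P.map (X i) = ν) {s : Set β} (hs : MeasurableSet s) :
    P.real (⋃ i, X i ⁻¹' s) = 1 - (1 - ν.real s) ^ Fintype.card ι := by
  have hinter : P (⋂ i, X i ⁻¹' sᶜ) = ν sᶜ ^ Fintype.card ι := by
    rw [hindep.meas_iInter fun i => ⟨sᶜ, hs.compl, rfl⟩, ← Finset.card_univ, ← Finset.prod_const]
    refine Finset.prod_congr rfl fun i _ => ?_
    rw [← hlaw i, Measure.map_apply (hmeas i) hs.compl]
  have hunion : ⋃ i, X i ⁻¹' s = (⋂ i, X i ⁻¹' sᶜ)ᶜ := by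
    simp only [compl_iInter, preimage_compl, compl_compl]
  rw [hunion, probReal_compl_eq_one_sub (MeasurableSet.iInter fun i => hmeas i hs.compl),
    measureReal_def, hinter, ENNReal.toReal_pow, ← measureReal_def, probReal_compl_eq_one_sub hs]

end

theorem stmt_13_general {Ω : Type*} [MeasurableSpace Ω] (P : Measure Ω) [IsProbabilityMeasure P]
    (μ : Measure ℝ) [IsProbabilityMeasure μ] (N : ℕ)
    (F : ℝ → ℝ) (hF : F = fun x => (μ (Set.Iic x)).toReal)
    (hFmono : StrictMono F) (hFcont : Continuous F)
    (X : Fin N → Ω → ℝ) (hmeas : ∀ i, Measurable (X i))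
    (hindep : iIndepFun X P)
    (hlaw : ∀ i, Measure.map (X i) P = μ)
    (ε : ℝ) (hε : ε ∈ Set.Icc (0 : ℝ) 1)
    (hne : (Finset.univ : Finset (Fin N)).Nonempty)
    (M : Ω → ℝ) (hM : ∀ ω, M ω = Finset.univ.inf' hne (fun i => X i ω)) :
    (P {ω | 1 - ε ≤ (μ (Set.Ici (M ω))).toReal}).toReal = 1 - (1 - ε) ^ N ∧
    (P {ω | F (M ω) ≤ ε}).toReal = 1 - (1 - ε) ^ N := by
  obtain rfl : F = cdf μ := by
    ext x
    rw [hF, cdf_eq_real, measureReal_def]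
  have hlevel : {ω | cdf μ (M ω) ≤ ε} = ⋃ i, X i ⁻¹' {x | cdf μ x ≤ ε} := by
    ext ω
    simp [hM, Finset.apply_inf'_le_iff hFmono.monotone]
  have hmin : P.real {ω | cdf μ (M ω) ≤ ε} = 1 - (1 - ε) ^ N := by
    rw [hlevel, hindep.measureReal_iUnion_preimage_of_identDistrib hmeas hlaw
      (measurableSet_le hFcont.measurable measurable_const), measureReal_cdf_le hFmono hFcont hε,
      Fintype.card_fin]
  have hsets : {ω | 1 - ε ≤ μ.real (Ici (M ω))} = {ω | cdf μ (M ω) ≤ ε} := by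
    simp only [measureReal_Ici_of_continuous_cdf hFcont, sub_le_sub_iff_left]
  exact ⟨hsets ▸ hmin, hmin⟩

/-- Tightness of the scenario bound for atomless distributions: with a strictly
increasing continuous CDF `F`, both `ℙ[μ([M,∞)) ≥ 1-ε]` and `ℙ[F(M) ≤ ε]` equal
`1 - (1-ε)^N`. -/
theorem stmt_13 {Ω : Type*} [MeasurableSpace Ω] (P : Measure Ω) [IsProbabilityMeasure P]
    (μ : Measure ℝ) [IsProbabilityMeasure μ] (N : ℕ) (hN : 0 < N)
    (F : ℝ → ℝ) (hF : F = fun x => (μ (Set.Iic x)).toReal)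
    (hFmono : StrictMono F) (hFcont : Continuous F)
    (X : Fin N → Ω → ℝ) (hmeas : ∀ i, Measurable (X i))
    (hindep : iIndepFun X P)
    (hlaw : ∀ i, Measure.map (X i) P = μ)
    (ε : ℝ) (hε : ε ∈ Set.Icc (0 : ℝ) 1)
    (hne : (Finset.univ : Finset (Fin N)).Nonempty)
    (M : Ω → ℝ) (hM : ∀ ω, M ω = Finset.univ.inf' hne (fun i => X i ω)) :
    (P {ω | 1 - ε ≤ (μ (Set.Ici (M ω))).toReal}).toReal = 1 - (1 - ε) ^ N ∧
    (P {ω | F (M ω) ≤ ε}).toReal = 1 - (1 - ε) ^ N :=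
  stmt_13_general P μ N F hF hFmono hFcont X hmeas hindep hlaw ε hε hne M hM
end
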